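/- arXiv:2505.05526 — 5 statements merged into one kernel-verified Lean document; each statement's English description precedes it below -/
import Mathlib

section
/- The Borel σ-algebra of ℝ (the smallest σ-algebra containing all open sets) coincides with the smallest family 𝒞 of subsets of ℝ which contains all open sets and is closed under countable intersections and under countable unions of pairwise disjoint sets. -/
/-!
Let `S` contain the open sets and be closed under countable intersections and countable
disjoint unions. In `ℝ` every closed set is a countable intersection of open sets, so `S` also
contains the closed sets. Hence the sets `s` with `s ∈ S` and `sᶜ ∈ S` include the open sets
and are closed under complements and countable disjoint unions (the complement of such a union
is the intersection of the complements); by Dynkin's π-λ theorem they include every Borel set.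
Conversely, the Borel sets themselves form such a family `S`.
-/

open Set

section

variable {X : Type*} [TopologicalSpace X] {S : Set (Set X)}

theorem IsGδ.mem_of_isOpen_mem {s : Set X} (hs : IsGδ s) (hopen : ∀ U, IsOpen U → U ∈ S)
    (hiInter : ∀ g : ℕ → Set X, (∀ n, g n ∈ S) → (⋂ n, g n) ∈ S) : s ∈ S := by
  obtain ⟨g, hg, rfl⟩ := hs.eq_iInter_nat
  exact hiInter g fun n => hopen _ (hg n)

theorem MeasurableSet.mem_and_compl_mem_of_isOpen_mem [MeasurableSpace X] [BorelSpace X]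
    [PerfectlyNormalSpace X] (hopen : ∀ U, IsOpen U → U ∈ S)
    (hiInter : ∀ g : ℕ → Set X, (∀ n, g n ∈ S) → (⋂ n, g n) ∈ S)
    (hiUnion : ∀ g : ℕ → Set X, (∀ n, g n ∈ S) →
      (Pairwise fun i j => Disjoint (g i) (g j)) → (⋃ n, g n) ∈ S)
    {s : Set X} (hs : MeasurableSet s) : s ∈ S ∧ sᶜ ∈ S := by
  refine MeasurableSet.induction_on_open (C := fun t _ => t ∈ S ∧ tᶜ ∈ S) ?_ ?_ ?_ s hs
  · exact fun U hU => ⟨hopen U hU, hU.isClosed_compl.isGδ.mem_of_isOpen_mem hopen hiInter⟩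
  · exact fun t _ ⟨ht, htc⟩ => ⟨htc, (compl_compl t).symm ▸ ht⟩
  · intro g hdisj _ hg
    refine ⟨hiUnion g (fun n => (hg n).1) hdisj, ?_⟩
    rw [compl_iUnion]
    exact hiInter _ fun n => (hg n).2

end

/-- The Borel σ-algebra of `ℝ` coincides with the smallest family of subsets
of `ℝ` containing the open sets and closed under countable intersections and
countable disjoint unions. -/
theorem borel_eq_smallest_class :
    {s : Set ℝ | MeasurableSet s} =
      ⋂₀ {S : Set (Set ℝ) |
        (∀ U : Set ℝ, IsOpen U → U ∈ S) ∧
        (∀ g : ℕ → Set ℝ, (∀ n, g n ∈ S) → (⋂ n, g n) ∈ S) ∧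
        (∀ g : ℕ → Set ℝ, (∀ n, g n ∈ S) →
          (Pairwise fun i j => Disjoint (g i) (g j)) → (⋃ n, g n) ∈ S)} := by
  refine Subset.antisymm ?_ ?_
  · intro s hs S ⟨hopen, hiInter, hiUnion⟩
    exact (MeasurableSet.mem_and_compl_mem_of_isOpen_mem hopen hiInter hiUnion hs).1
  · intro s hs
    exact hs {t | MeasurableSet t}
      ⟨fun _ hU => hU.measurableSet, fun g => MeasurableSet.iInter (f := g),
        fun g hg _ => MeasurableSet.iUnion (f := g) hg⟩
end

section
/- Let S and T be bounded self-adjoint operators on a complex Hilbert space H. Then the Hausdorff distance between their spectra satisfies d_H(σ(S), σ(T)) ≤ ‖S − T‖, where d_H(A,B) = max( sup_{x∈A} inf_{y∈B} |x−y| , sup_{y∈B} inf_{x∈A} |x−y| ). -/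
/-!
Let `z ∈ σ(S)` and suppose `d := dist(z, σ(T)) > ‖S - T‖`. Then `z - T` is invertible and normal,
so the norm of its inverse equals its spectral radius, which is `1 / d`. Hence
`z - S = (z - T) (1 - (z - T)⁻¹ (S - T))` is invertible by a Neumann series, a contradiction.
By symmetry the same bound holds with `S` and `T` exchanged.
-/

open Metric

theorem Units.norm_inv_le_of_forall_le_norm_spectrum {A : Type*} [CStarAlgebra A] (u : Aˣ)
    [IsStarNormal (u : A)] {d : ℝ} (hd : 0 < d) (h : ∀ μ ∈ spectrum ℂ (u : A), d ≤ ‖μ‖) :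
    ‖(↑u⁻¹ : A)‖ ≤ d⁻¹ := by
  have hradius : spectralRadius ℂ (↑u⁻¹ : A) ≤ ENNReal.ofReal d⁻¹ := by
    refine iSup₂_le fun μ hμ => ?_
    rw [← spectrum.map_inv, Set.mem_inv] at hμ
    have hμ' : d ≤ ‖μ‖⁻¹ := norm_inv μ ▸ h _ hμ
    have hμ0 : 0 < ‖μ‖ := _root_.inv_pos.mp (hd.trans_le hμ')
    rw [← enorm_eq_nnnorm, ← ofReal_norm]
    exact ENNReal.ofReal_le_ofReal ((le_inv_comm₀ hd hμ0).mp hμ')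
  rw [IsStarNormal.spectralRadius_eq_nnnorm, ← enorm_eq_nnnorm, ← ofReal_norm] at hradius
  exact (ENNReal.ofReal_le_ofReal_iff (by positivity)).mp hradius

theorem infDist_spectrum_le_norm_sub {A : Type*} [CStarAlgebra A] {a b : A} [IsStarNormal b]
    {z : ℂ} (hz : z ∈ spectrum ℂ a) : infDist z (spectrum ℂ b) ≤ ‖a - b‖ := by
  by_contra! hlt
  set d := infDist z (spectrum ℂ b)
  have hd : 0 < d := (norm_nonneg _).trans_lt hlt
  have hzb : z ∉ spectrum ℂ b := fun hmem => hd.ne' (infDist_zero_of_mem hmem)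
  set u := (spectrum.notMem_iff.mp hzb).unit
  have : IsStarNormal (algebraMap ℂ A z) := ⟨Algebra.commute_algebraMap_right z _⟩
  have : IsStarNormal (u : A) := (Algebra.commute_algebraMap_left z (star b)).isStarNormal_sub
  have hspec : ∀ μ ∈ spectrum ℂ (u : A), d ≤ ‖μ‖ := by
    intro μ hμ
    obtain ⟨w, hw, ν, hν, rfl⟩ := (spectrum.singleton_sub_eq b z).symm ▸ hμ
    rw [Set.mem_singleton_iff.mp hw, ← dist_eq_norm]
    exact infDist_le_dist_of_mem hν
  have hsmall : ‖(↑u⁻¹ : A) * (a - b)‖ < 1 :=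
    calc ‖(↑u⁻¹ : A) * (a - b)‖ ≤ ‖(↑u⁻¹ : A)‖ * ‖a - b‖ := norm_mul_le _ _
      _ ≤ d⁻¹ * ‖a - b‖ := by gcongr; exact u.norm_inv_le_of_forall_le_norm_spectrum hd hspec
      _ < d⁻¹ * d := by gcongr
      _ = 1 := inv_mul_cancel₀ hd.ne'
  have hfactor : algebraMap ℂ A z - a = u * (1 - (↑u⁻¹ : A) * (a - b)) := by
    rw [mul_sub, mul_one, Units.mul_inv_cancel_left, IsUnit.unit_spec]
    abel
  exact spectrum.notMem_iff.mpr (hfactor ▸ u.isUnit.mul (isUnit_one_sub_of_norm_lt_one hsmall)) hz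

/-- The Hausdorff distance between the spectra of two bounded self-adjoint
operators on a complex Hilbert space is at most the operator norm of their
difference. -/
theorem hausdorffDist_spectra_le
    {H : Type*} [NormedAddCommGroup H] [InnerProductSpace ℂ H] [CompleteSpace H]
    (S T : H →L[ℂ] H) (hS : IsSelfAdjoint S) (hT : IsSelfAdjoint T) :
    Metric.hausdorffDist (spectrum ℂ S) (spectrum ℂ T) ≤ ‖S - T‖ := by
  have := hS.isStarNormal
  have := hT.isStarNormal
  exact hausdorffDist_le_of_infDist (norm_nonneg _) (fun z hz => infDist_spectrum_le_norm_sub hz)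
    (fun z hz => norm_sub_rev S T ▸ infDist_spectrum_le_norm_sub hz)
end

section
/- (Fredholm alternative) Let T be a compact bounded linear operator on a separable complex Hilbert space H. If the operator I − T is not boundedly invertible, then the equation x = Tx has a nonzero solution x ∈ H, i.e. 1 is an eigenvalue of T. -/
theorem fredholm_alternative_general
    {H : Type*} [NormedAddCommGroup H] [InnerProductSpace ℂ H] [CompleteSpace H]
    (T : H →L[ℂ] H)
    (hT : IsCompact (closure (T '' Metric.closedBall 0 1)))
    (h : ¬IsUnit (1 - T)) :
    ∃ x : H, x ≠ 0 ∧ T x = x := by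
  have hTc : IsCompactOperator T :=
    (isCompactOperator_iff_isCompact_closure_image_closedBall (T : H →ₗ[ℂ] H) one_pos).mpr hT
  have h_eig : Module.End.HasEigenvalue (T : Module.End ℂ H) 1 := by
    refine (hTc.hasEigenvalue_or_mem_resolventSet one_ne_zero).resolve_right ?_
    simpa [spectrum.mem_resolventSet_iff] using h
  obtain ⟨x, hx⟩ := h_eig.exists_hasEigenvector
  exact ⟨x, hx.2, by simpa using hx.apply_eq_smul⟩

/-- Fredholm alternative: if `T` is a compact operator on a separable complex
Hilbert space and `I - T` is not boundedly invertible, then `x = Tx` has a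
nonzero solution. -/
theorem fredholm_alternative
    {H : Type*} [NormedAddCommGroup H] [InnerProductSpace ℂ H] [CompleteSpace H]
    [TopologicalSpace.SeparableSpace H]
    (T : H →L[ℂ] H)
    (hT : IsCompact (closure (T '' Metric.closedBall 0 1)))
    (h : ¬IsUnit (1 - T)) :
    ∃ x : H, x ≠ 0 ∧ T x = x :=
  fredholm_alternative_general T hT h
end

section
/- (Riesz–Schauder) Let T be a compact bounded linear operator on a separable complex Hilbert space H. Then the spectrum σ(T) has no accumulation point in ℂ other than possibly 0 (equivalently, σ(T) \ {0} is discrete in ℂ \ {0}); moreover, for every nonzero λ ∈ σ(T), λ is an eigenvalue of T and the eigenspace E_λ = {x ∈ H : Tx = λx} is finite dimensional. -/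
/-!
At a nonzero λ the Fredholm alternative makes λ an eigenvalue, and T restricts to λ • id on the
eigenspace, so the eigenspace carries a compact identity and is finite dimensional. For
discreteness, suppose there are infinitely many eigenvalues μₙ with ‖μₙ‖ ≥ δ > 0, with
eigenvectors xₙ. The spans Yₙ of x₀, …, xₙ₋₁ increase strictly, T maps each Yₙ into itself and
μₙ - T maps Yₙ₊₁ into Yₙ; Riesz's lemma gives bounded vₙ ∈ Yₙ₊₁ at distance ≥ 1 from Yₙ. Then for
m < n, Tvₙ - Tvₘ = μₙ vₙ - (element of Yₙ) has norm ≥ ‖μₙ‖ ≥ δ, so (Tvₙ) has no convergent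
subsequence, contradicting compactness.
-/

open Filter Topology Module End

section EigenvectorChain

variable {𝕜 X : Type*} [Field 𝕜] [AddCommGroup X] [Module 𝕜 X] {f : End 𝕜 X} {μ : ℕ → 𝕜}
  {x : ℕ → X}

theorem Module.End.span_image_Iio_lt_succ_of_hasEigenvector (hμ : μ.Injective)
    (hx : ∀ n, f.HasEigenvector (μ n) (x n)) (n : ℕ) :
    Submodule.span 𝕜 (x '' Set.Iio n) < Submodule.span 𝕜 (x '' Set.Iio (n + 1)) := by
  refine lt_of_le_of_ne (Submodule.span_mono (Set.image_mono (Set.Iio_subset_Iio n.le_succ)))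
    fun h => ?_
  have hxn : x n ∈ Submodule.span 𝕜 (x '' Set.Iio (n + 1)) :=
    Submodule.subset_span ⟨n, n.lt_succ_self, rfl⟩
  exact (eigenvectors_linearIndependent' f μ hμ x hx).notMem_span_image (by simp)
    (h.symm ▸ hxn)

theorem Module.End.smul_sub_apply_mem_span_image_Iio (hx : ∀ n, f (x n) = μ n • x n) {n : ℕ}
    {v : X} (hv : v ∈ Submodule.span 𝕜 (x '' Set.Iio (n + 1))) :
    μ n • v - f v ∈ Submodule.span 𝕜 (x '' Set.Iio n) := by
  suffices Submodule.span 𝕜 (x '' Set.Iio (n + 1)) ≤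
      (Submodule.span 𝕜 (x '' Set.Iio n)).comap (μ n • 1 - f) from this hv
  rw [Submodule.span_le]
  rintro _ ⟨i, hi, rfl⟩
  have hxi : (μ n • 1 - f) (x i) = (μ n - μ i) • x i := by simp [hx i, sub_smul]
  rw [SetLike.mem_coe, Submodule.mem_comap, hxi]
  rcases (Nat.lt_succ_iff.mp hi).lt_or_eq with hin | rfl
  · exact Submodule.smul_mem _ _ (Submodule.subset_span ⟨i, hin, rfl⟩)
  · simp

end EigenvectorChain

section Normed

variable {𝕜 X : Type*} [NontriviallyNormedField 𝕜] [NormedAddCommGroup X] [NormedSpace 𝕜 X]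

theorem Submodule.exists_mem_norm_le_one_le_norm_sub {F G : Submodule 𝕜 X}
    (hF : IsClosed (F : Set X)) (hFG : F < G) {c : 𝕜} (hc : 1 < ‖c‖) {R : ℝ} (hR : ‖c‖ < R) :
    ∃ v ∈ G, ‖v‖ ≤ R ∧ ∀ y ∈ F, 1 ≤ ‖v - y‖ := by
  obtain ⟨v, hvG, hvF⟩ := SetLike.exists_of_lt hFG
  obtain ⟨⟨w, hwG⟩, hw, hwF⟩ := riesz_lemma_of_norm_lt hc hR (F := F.comap G.subtype)
    (hF.preimage continuous_subtype_val) ⟨⟨v, hvG⟩, hvF⟩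
  exact ⟨w, hwG, hw, fun y hy => hwF ⟨y, hFG.le hy⟩ hy⟩

theorem Module.End.exists_seq_norm_le_norm_apply_sub_of_hasEigenvector [CompleteSpace 𝕜]
    {f : End 𝕜 X} {μ : ℕ → 𝕜} (hμ : μ.Injective) (hμ₀ : ∀ n, μ n ≠ 0) {x : ℕ → X}
    (hx : ∀ n, f.HasEigenvector (μ n) (x n)) {c : 𝕜} (hc : 1 < ‖c‖) {R : ℝ} (hR : ‖c‖ < R) :
    ∃ v : ℕ → X, (∀ n, ‖v n‖ ≤ R) ∧ ∀ m n, m < n → ‖μ n‖ ≤ ‖f (v n) - f (v m)‖ := by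
  set Y : ℕ → Submodule 𝕜 X := fun n => Submodule.span 𝕜 (x '' Set.Iio n)
  have hY : Monotone Y := fun m n hmn =>
    Submodule.span_mono (Set.image_mono (Set.Iio_subset_Iio hmn))
  have hY_closed (n : ℕ) : IsClosed (Y n : Set X) :=
    haveI := FiniteDimensional.span_of_finite 𝕜 ((Set.finite_Iio n).image x)
    (Y n).closed_of_finiteDimensional
  have hY_sub {n : ℕ} {v : X} (hv : v ∈ Y (n + 1)) : μ n • v - f v ∈ Y n :=
    smul_sub_apply_mem_span_image_Iio (fun i => (hx i).apply_eq_smul) hv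
  choose v hvY hvR hv_far using fun n => Submodule.exists_mem_norm_le_one_le_norm_sub
    (hY_closed n) (span_image_Iio_lt_succ_of_hasEigenvector hμ hx n) hc hR
  refine ⟨v, hvR, fun m n hmn => ?_⟩
  have hfvm : f (v m) ∈ Y n := by
    have : f (v m) = μ m • v m - (μ m • v m - f (v m)) := by abel
    exact hY hmn (this ▸ Submodule.sub_mem _ (Submodule.smul_mem _ _ (hvY m))
      (hY m.le_succ (hY_sub (hvY m))))
  set w := (μ n • v n - f (v n)) + f (v m)
  have hw : (μ n)⁻¹ • w ∈ Y n :=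
    Submodule.smul_mem _ _ (Submodule.add_mem _ (hY_sub (hvY n)) hfvm)
  have hdiff : f (v n) - f (v m) = μ n • (v n - (μ n)⁻¹ • w) := by
    rw [smul_sub, smul_inv_smul₀ (hμ₀ n)]
    simp only [w]
    abel
  calc ‖μ n‖ = ‖μ n‖ * 1 := (mul_one _).symm
    _ ≤ ‖μ n‖ * ‖v n - (μ n)⁻¹ • w‖ := by gcongr; exact hv_far n _ hw
    _ = ‖f (v n) - f (v m)‖ := by rw [hdiff, norm_smul]

end Normed

namespace IsCompactOperator

variable {𝕜 X : Type*} [NontriviallyNormedField 𝕜] [NormedAddCommGroup X] [NormedSpace 𝕜 X]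
  {T : X →L[𝕜] X}

theorem exists_lt_norm_apply_sub_lt {Y : Type*} [NormedAddCommGroup Y] [NormedSpace 𝕜 Y]
    {S : X →L[𝕜] Y} (hS : IsCompactOperator S) {u : ℕ → X} {R : ℝ} (hu : ∀ n, ‖u n‖ ≤ R)
    {ε : ℝ} (hε : 0 < ε) : ∃ m n, m < n ∧ ‖S (u n) - S (u m)‖ < ε := by
  obtain ⟨K, hK, hSK⟩ := hS.image_closedBall_subset_compact R
  obtain ⟨y, -, φ, hφ, hφy⟩ := hK.tendsto_subseq fun n => hSK ⟨u n, by simpa using hu n, rfl⟩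
  obtain ⟨N, hN⟩ := Metric.cauchySeq_iff'.mp hφy.cauchySeq ε hε
  exact ⟨φ N, φ (N + 1), hφ N.lt_succ_self, by simpa [dist_eq_norm] using hN (N + 1) N.le_succ⟩

theorem finite_setOf_hasEigenvalue_le_norm [CompleteSpace 𝕜] (hT : IsCompactOperator T)
    {δ : ℝ} (hδ : 0 < δ) : {μ : 𝕜 | HasEigenvalue (T : End 𝕜 X) μ ∧ δ ≤ ‖μ‖}.Finite := by
  by_contra hinf
  let μ := Set.Infinite.natEmbedding _ hinf
  choose x hx using fun n => (μ n).2.1.exists_hasEigenvector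
  obtain ⟨c, hc⟩ := NormedField.exists_one_lt_norm 𝕜
  obtain ⟨v, hvR, hv_sep⟩ := exists_seq_norm_le_norm_apply_sub_of_hasEigenvector
    (Subtype.val_injective.comp μ.injective) (fun n => norm_pos_iff.mp (hδ.trans_le (μ n).2.2))
    hx hc (lt_add_one ‖c‖)
  obtain ⟨m, n, hmn, hlt⟩ := hT.exists_lt_norm_apply_sub_lt hvR hδ
  exact hlt.not_ge ((μ n).2.2.trans (hv_sep m n hmn))

theorem not_accPt_spectrum [CompleteSpace 𝕜] [CompleteSpace X] (hT : IsCompactOperator T)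
    {z : 𝕜} (hz : z ≠ 0) :
    ¬AccPt z (𝓟 (spectrum 𝕜 T)) := by
  intro hacc
  have hz₂ : 0 < ‖z‖ / 2 := half_pos (norm_pos_iff.mpr hz)
  have hU : {μ : 𝕜 | ‖z‖ / 2 < ‖μ‖} ∈ 𝓝 z :=
    (isOpen_lt continuous_const continuous_norm).mem_nhds (half_lt_self (norm_pos_iff.mpr hz))
  refine Set.Infinite.of_accPt (hacc.nhds_inter hU)
    ((hT.finite_setOf_hasEigenvalue_le_norm hz₂).subset ?_)
  rintro μ ⟨hμz, hμ⟩
  exact ⟨(hT.hasEigenvalue_iff_mem_spectrum (norm_pos_iff.mp (hz₂.trans hμz))).mpr hμ, hμz.le⟩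

end IsCompactOperator

theorem riesz_schauder_general
    {H : Type*} [NormedAddCommGroup H] [InnerProductSpace ℂ H] [CompleteSpace H]
    (T : H →L[ℂ] H)
    (hT : IsCompact (closure (T '' Metric.closedBall 0 1))) :
    (∀ z : ℂ, z ≠ 0 → ¬AccPt z (Filter.principal (spectrum ℂ T))) ∧
    ∀ lam ∈ spectrum ℂ T, lam ≠ 0 →
      (∃ x : H, x ≠ 0 ∧ T x = lam • x) ∧
      FiniteDimensional ℂ (Module.End.eigenspace T.toLinearMap lam) := by
  have hTc : IsCompactOperator T :=
    (isCompactOperator_iff_isCompact_closure_image_closedBall (T : H →ₗ[ℂ] H) one_pos).mpr hT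
  refine ⟨fun z hz => hTc.not_accPt_spectrum hz, fun lam hlam hlam₀ => ⟨?_,
    T.finite_dimensional_eigenspace hTc lam hlam₀⟩⟩
  obtain ⟨x, hx⟩ := ((hTc.hasEigenvalue_iff_mem_spectrum hlam₀).mpr hlam).exists_hasEigenvector
  exact ⟨x, hx.2, hx.apply_eq_smul⟩

/-- Riesz–Schauder theorem: the spectrum of a compact operator on a separable
complex Hilbert space can accumulate only at `0`; every nonzero spectral value
is an eigenvalue with finite dimensional eigenspace. -/
theorem riesz_schauder
    {H : Type*} [NormedAddCommGroup H] [InnerProductSpace ℂ H] [CompleteSpace H]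
    [TopologicalSpace.SeparableSpace H]
    (T : H →L[ℂ] H)
    (hT : IsCompact (closure (T '' Metric.closedBall 0 1))) :
    (∀ z : ℂ, z ≠ 0 → ¬AccPt z (Filter.principal (spectrum ℂ T))) ∧
    ∀ lam ∈ spectrum ℂ T, lam ≠ 0 →
      (∃ x : H, x ≠ 0 ∧ T x = lam • x) ∧
      FiniteDimensional ℂ (Module.End.eigenspace T.toLinearMap lam) :=
  riesz_schauder_general T hT
end

section
/- Let Ω ⊆ ℂ be open, X a complex Banach space, and f : Ω → X. If f is weakly holomorphic, i.e. for every continuous linear functional ℓ ∈ X* the function z ↦ ℓ(f(z)) is holomorphic on Ω, then f is holomorphic on Ω in the norm sense: the limit f′(z) = lim_{h→0} (f(z+h) − f(z))/h exists in X for every z ∈ Ω. Moreover, for each z₀ ∈ Ω and each r > 0 with the open disc B(z₀,r) contained in Ω, there exist coefficients aₙ ∈ X such that f(z) = Σ_{n≥0} aₙ (z − z₀)ⁿ with the series converging in X for |z − z₀| < r. -/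
/-!
Banach–Steinhaus makes a weakly holomorphic `f` locally bounded, and Cauchy's estimate for the
derivatives of the functions `ℓ ∘ f`, uniform in `‖ℓ‖`, then makes `f` locally Lipschitz. Being
continuous, `f` has a Cauchy integral over every circle in `Ω`; this integral is analytic inside the
circle, and it agrees with `f` there because every functional `ℓ` commutes with the integral and
`ℓ ∘ f` obeys the scalar Cauchy formula. The expansion on a whole disc in `Ω` is then the Taylor
series of the holomorphic function `f`.
-/

open Metric Complex
open scoped Topology NNReal

section WeakBounds

variable {𝕜 X : Type*} [RCLike 𝕜] [NormedAddCommGroup X] [NormedSpace 𝕜 X]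

theorem exists_norm_le_of_forall_dual_bounded {ι : Type*} (v : ι → X)
    (h : ∀ ℓ : StrongDual 𝕜 X, ∃ C, ∀ i, ‖ℓ (v i)‖ ≤ C) : ∃ C, ∀ i, ‖v i‖ ≤ C := by
  obtain ⟨C, hC⟩ :=
    banach_steinhaus (g := fun i => NormedSpace.inclusionInDoubleDual 𝕜 X (v i)) h
  exact ⟨C, fun i => (NormedSpace.inclusionInDoubleDualLi 𝕜).norm_map (v i) ▸ hC i⟩

theorem IsCompact.exists_bound_of_weakly_continuousOn {α : Type*} [TopologicalSpace α]
    {K : Set α} (hK : IsCompact K) {f : α → X}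
    (hf : ∀ ℓ : StrongDual 𝕜 X, ContinuousOn (fun z => ℓ (f z)) K) :
    ∃ M, ∀ z ∈ K, ‖f z‖ ≤ M := by
  obtain ⟨M, hM⟩ := exists_norm_le_of_forall_dual_bounded (𝕜 := 𝕜) (fun z : K => f z) fun ℓ =>
    let ⟨C, hC⟩ := hK.exists_bound_of_continuousOn (hf ℓ)
    ⟨C, fun z => hC z z.2⟩
  exact ⟨M, fun z hz => hM ⟨z, hz⟩⟩

end WeakBounds

theorem ContinuousLinearMap.circleIntegral_comp_comm {E F : Type*}
    [NormedAddCommGroup E] [NormedSpace ℂ E] [CompleteSpace E]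
    [NormedAddCommGroup F] [NormedSpace ℂ F] [CompleteSpace F]
    (L : E →L[ℂ] F) {f : ℂ → E} {c : ℂ} {R : ℝ} (hf : CircleIntegrable f c R) :
    ∮ z in C(c, R), L (f z) = L (∮ z in C(c, R), f z) := by
  simp only [circleIntegral, ← L.map_smul]
  exact L.intervalIntegral_comp_comm ((circleIntegrable_iff R).mp hf)

theorem norm_sub_le_of_forall_mem_closedBall_norm_le {F : Type*} [NormedAddCommGroup F]
    [NormedSpace ℂ F] {g : ℂ → F} {c z : ℂ} {R C : ℝ} (hR : 0 < R)
    (hg : DifferentiableOn ℂ g (closedBall c R)) (hC : ∀ w ∈ closedBall c R, ‖g w‖ ≤ C)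
    (hz : z ∈ ball c (R / 2)) : ‖g z - g c‖ ≤ C / (R / 2) * ‖z - c‖ := by
  have hsub : ∀ w ∈ ball c (R / 2), closedBall w (R / 2) ⊆ closedBall c R := fun w hw =>
    closedBall_subset_closedBall' (by linarith [mem_ball.mp hw])
  have hderiv : ∀ w ∈ ball c (R / 2), ‖deriv g w‖ ≤ C / (R / 2) := fun w hw =>
    norm_deriv_le_of_forall_mem_sphere_norm_le (half_pos hR)
      ((hg.mono ((closure_ball_subset_closedBall).trans (hsub w hw))).diffContOnCl)
      fun x hx => hC x (hsub w hw (sphere_subset_closedBall hx))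
  exact (convex_ball c (R / 2)).norm_image_sub_le_of_norm_deriv_le
    (fun w hw =>
      hg.differentiableAt (closedBall_mem_nhds_of_mem (ball_subset_ball (by linarith) hw)))
    hderiv (mem_ball_self (half_pos hR)) hz

section WeaklyHolomorphic

variable {X : Type*} [NormedAddCommGroup X] [NormedSpace ℂ X] {f : ℂ → X}

theorem continuousAt_of_weakly_differentiableOn {Ω : Set ℂ} {z₀ : ℂ} (hΩ : Ω ∈ 𝓝 z₀)
    (hf : ∀ ℓ : StrongDual ℂ X, DifferentiableOn ℂ (fun z => ℓ (f z)) Ω) :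
    ContinuousAt f z₀ := by
  obtain ⟨R, hR, hRΩ⟩ := nhds_basis_closedBall.mem_iff.mp hΩ
  obtain ⟨M, hM⟩ := (isCompact_closedBall z₀ R).exists_bound_of_weakly_continuousOn
    fun ℓ => ((hf ℓ).mono hRΩ).continuousOn
  have hM₀ : 0 ≤ M := (norm_nonneg _).trans (hM z₀ (mem_closedBall_self hR.le))
  refine continuousAt_of_locally_lipschitz (half_pos hR) (M / (R / 2)) fun z hz => ?_
  rw [dist_eq_norm, dist_eq_norm]
  refine NormedSpace.norm_le_dual_bound ℂ _ (by positivity) fun ℓ => ?_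
  calc ‖ℓ (f z - f z₀)‖ = ‖ℓ (f z) - ℓ (f z₀)‖ := by rw [map_sub]
    _ ≤ ‖ℓ‖ * M / (R / 2) * ‖z - z₀‖ :=
      norm_sub_le_of_forall_mem_closedBall_norm_le hR ((hf ℓ).mono hRΩ)
        (fun w hw => (ℓ.le_opNorm _).trans (by gcongr; exact hM w hw)) hz
    _ = _ := by ring

theorem hasFPowerSeriesOnBall_of_weakly_differentiableOn [CompleteSpace X] {c : ℂ} {R : ℝ≥0}
    (hR : 0 < R) (hf : ∀ ℓ : StrongDual ℂ X, DifferentiableOn ℂ (fun z => ℓ (f z)) (closedBall c R))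
    (hcont : ContinuousOn f (closedBall c R)) :
    HasFPowerSeriesOnBall f (cauchyPowerSeries f c R) c R := by
  have hf_sphere := hcont.mono sphere_subset_closedBall
  refine (hasFPowerSeriesOn_cauchy_integral (hf_sphere.circleIntegrable R.2) hR).congr
    fun w hw => ?_
  rw [eball_coe] at hw
  have hint : CircleIntegrable (fun z => (z - w)⁻¹ • f z) c R :=
    (((continuousOn_id.sub continuousOn_const).inv₀ fun z hz =>
      sub_ne_zero.mpr (sphere_disjoint_ball.ne_of_mem hz hw)).smul hf_sphere).circleIntegrable R.2
  refine (SeparatingDual.eq_iff_forall_dual_eq (R := ℂ)).mpr fun ℓ => ?_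
  rw [map_smul, ← ℓ.circleIntegral_comp_comm hint]
  simp only [map_smul, (hf ℓ).circleIntegral_sub_inv_smul hw]
  rw [smul_smul, inv_mul_cancel₀ two_pi_I_ne_zero, one_smul]

theorem differentiableAt_of_weakly_differentiableOn [CompleteSpace X] {Ω : Set ℂ} {z₀ : ℂ}
    (hΩ : IsOpen Ω) (hf : ∀ ℓ : StrongDual ℂ X, DifferentiableOn ℂ (fun z => ℓ (f z)) Ω)
    (hz₀ : z₀ ∈ Ω) : DifferentiableAt ℂ f z₀ := by
  obtain ⟨R, hR, hRΩ⟩ := nhds_basis_closedBall.mem_iff.mp (hΩ.mem_nhds hz₀)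
  lift R to ℝ≥0 using hR.le
  have hcont : ContinuousOn f (closedBall z₀ R) := fun z hz =>
    (continuousAt_of_weakly_differentiableOn (hΩ.mem_nhds (hRΩ hz)) hf).continuousWithinAt
  exact (hasFPowerSeriesOnBall_of_weakly_differentiableOn hR (fun ℓ => (hf ℓ).mono hRΩ)
    hcont).hasFPowerSeriesAt.differentiableAt

end WeaklyHolomorphic

/-- A weakly holomorphic Banach space valued function on an open set `Ω ⊆ ℂ`
is holomorphic in the norm sense, and admits a power series expansion on every
open disc contained in `Ω`. -/
theorem weakly_holomorphic_is_holomorphic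
    {X : Type*} [NormedAddCommGroup X] [NormedSpace ℂ X] [CompleteSpace X]
    (Ω : Set ℂ) (hΩ : IsOpen Ω) (f : ℂ → X)
    (hf : ∀ ℓ : X →L[ℂ] ℂ, DifferentiableOn ℂ (fun z => ℓ (f z)) Ω) :
    (∀ z ∈ Ω, DifferentiableAt ℂ f z) ∧
    ∀ z₀ ∈ Ω, ∀ r : ℝ, 0 < r → Metric.ball z₀ r ⊆ Ω →
      ∃ a : ℕ → X, ∀ z ∈ Metric.ball z₀ r,
        Filter.Tendsto (fun N => ∑ n ∈ Finset.range N, (z - z₀) ^ n • a n)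
          Filter.atTop (nhds (f z)) := by
  have hdiff : ∀ z ∈ Ω, DifferentiableAt ℂ f z := fun z hz =>
    differentiableAt_of_weakly_differentiableOn hΩ hf hz
  refine ⟨hdiff, fun z₀ _ r _ hball =>
    ⟨fun n => (n.factorial : ℂ)⁻¹ • iteratedDeriv n f z₀, fun z hz => ?_⟩⟩
  have hsum := Complex.hasSum_taylorSeries_on_ball
    (fun w hw => (hdiff w (hball hw)).differentiableWithinAt) hz
  simp only [smul_comm ((Nat.factorial _ : ℂ)⁻¹)] at hsum
  exact hsum.tendsto_sum_nat
end
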